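/- arXiv:2512.20484 — 2 statements merged into one kernel-verified Lean document; each statement's English description precedes it below -/
import Mathlib

section
/- There exists τ₁ > b such that for all τ > τ₁, κ(τ) = -2p'(τ)/(2p'(τ) + τp''(τ)) > 0, where p is the van der Waals pressure law. -/
/-- There exists `τ₁ > b` such that `κ(τ) = -2p'(τ)/(2p'(τ)+τp''(τ)) > 0`
for all `τ > τ₁`, for the van der Waals pressure law. -/
theorem vdw_kappa_eventually_pos
    (K a b γ : ℝ) (hK : 0 < K) (ha : 0 < a) (hb : 0 < b)
    (hγ : γ ∈ Set.Ioo (0:ℝ) 1) :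
    ∃ τ₁ : ℝ, b < τ₁ ∧ ∀ τ : ℝ, τ₁ < τ →
      -2 * (-(K * (γ + 1)) / (τ - b) ^ (γ + 2) + 2 * a / τ ^ 3) /
        (2 * (-(K * (γ + 1)) / (τ - b) ^ (γ + 2) + 2 * a / τ ^ 3) +
          τ * (K * (γ + 1) * (γ + 2) / (τ - b) ^ (γ + 3) - 6 * a / τ ^ 4)) > 0 := by
  obtain ⟨hγ0, hγ1⟩ := hγ
  have hγ1' : (0:ℝ) < 1 - γ := by linarith
  set C : ℝ := 2 * a / (K * γ * (γ + 1)) with hCdef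
  have hCpos : 0 < C := by positivity
  refine ⟨max (b + 1) (C ^ ((1:ℝ)/(1-γ))), lt_of_lt_of_le (by linarith) (le_max_left _ _), ?_⟩
  intro τ hτ
  have hτb1 : b + 1 < τ := lt_of_le_of_lt (le_max_left _ _) hτ
  have hτC : C ^ ((1:ℝ)/(1-γ)) < τ := lt_of_le_of_lt (le_max_right _ _) hτ
  have hτpos : 0 < τ := by linarith
  have hs : 0 < τ - b := by linarith
  have hsle : τ - b ≤ τ := by linarith
  -- key growth inequality
  have h1 : C < τ ^ (1 - γ) := by
    calc C = (C ^ ((1:ℝ)/(1-γ))) ^ (1 - γ) := by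
          rw [← Real.rpow_mul hCpos.le, one_div, inv_mul_cancel₀ hγ1'.ne', Real.rpow_one]
      _ < τ ^ (1 - γ) := Real.rpow_lt_rpow (Real.rpow_nonneg hCpos.le _) hτC hγ1'
  have hkey : 2 * a < K * γ * (γ + 1) * τ ^ (1 - γ) := by
    have h2 : K * γ * (γ + 1) * C < K * γ * (γ + 1) * τ ^ (1 - γ) :=
      mul_lt_mul_of_pos_left h1 (by positivity)
    have h3 : K * γ * (γ + 1) * C = 2 * a := by
      rw [hCdef]; field_simp
    linarith
  have hτ1γ : 0 < τ ^ (1 - γ) := Real.rpow_pos_of_pos hτpos _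
  have hkey2 : 2 * a < K * (γ + 1) * τ ^ (1 - γ) := by nlinarith
  -- rpow comparisons
  have hs2 : (τ - b) ^ (γ + 2) ≤ τ ^ (γ + 2) := Real.rpow_le_rpow hs.le hsle (by linarith)
  have hs3 : (τ - b) ^ (γ + 3) ≤ τ ^ (γ + 3) := Real.rpow_le_rpow hs.le hsle (by linarith)
  have hsp2 : 0 < (τ - b) ^ (γ + 2) := Real.rpow_pos_of_pos hs _
  have hsp3 : 0 < (τ - b) ^ (γ + 3) := Real.rpow_pos_of_pos hs _
  have hτp2 : 0 < τ ^ (γ + 2) := Real.rpow_pos_of_pos hτpos _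
  have hτp3 : 0 < τ ^ (γ + 3) := Real.rpow_pos_of_pos hτpos _
  have hτ3eq : (τ:ℝ) ^ (3:ℕ) = τ ^ (γ + 2) * τ ^ (1 - γ) := by
    rw [← Real.rpow_add hτpos, show γ + 2 + (1 - γ) = ((3:ℕ):ℝ) by push_cast; ring,
      Real.rpow_natCast]
  have hτ4eq : (τ:ℝ) ^ (4:ℕ) = τ ^ (γ + 3) * τ ^ (1 - γ) := by
    rw [← Real.rpow_add hτpos, show γ + 3 + (1 - γ) = ((4:ℕ):ℝ) by push_cast; ring,
      Real.rpow_natCast]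
  -- numerator positive
  have hnum1 : 2 * a / τ ^ 3 < K * (γ + 1) / τ ^ (γ + 2) := by
    rw [div_lt_div_iff₀ (by positivity) hτp2, hτ3eq]
    nlinarith
  have hnum2 : K * (γ + 1) / τ ^ (γ + 2) ≤ K * (γ + 1) / (τ - b) ^ (γ + 2) := by
    gcongr
  have hnum : 0 < -2 * (-(K * (γ + 1)) / (τ - b) ^ (γ + 2) + 2 * a / τ ^ 3) := by
    have := hnum1.trans_le hnum2
    have hrw : -(K * (γ + 1)) / (τ - b) ^ (γ + 2) = -(K * (γ + 1) / (τ - b) ^ (γ + 2)) :=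
      neg_div _ _
    rw [hrw]
    linarith
  -- denominator: rewrite
  have hss : (τ - b) ^ (γ + 3) = (τ - b) ^ (γ + 2) * (τ - b) := by
    rw [show γ + 3 = (γ + 2) + 1 by ring, Real.rpow_add_one hs.ne']
  have hDeq : 2 * (-(K * (γ + 1)) / (τ - b) ^ (γ + 2) + 2 * a / τ ^ 3) +
      τ * (K * (γ + 1) * (γ + 2) / (τ - b) ^ (γ + 3) - 6 * a / τ ^ 4) =
      K * (γ + 1) * (γ * τ + 2 * b) / (τ - b) ^ (γ + 3) - 2 * a / τ ^ 3 := by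
    rw [hss]
    field_simp
    ring
  have hden1 : 2 * a / τ ^ 3 < K * (γ + 1) * (γ * τ) / τ ^ (γ + 3) := by
    rw [div_lt_div_iff₀ (by positivity) hτp3]
    have : 2 * a * τ ^ (γ + 3) < (K * γ * (γ + 1) * τ ^ (1 - γ)) * τ ^ (γ + 3) :=
      mul_lt_mul_of_pos_right hkey hτp3
    calc 2 * a * τ ^ (γ + 3) < (K * γ * (γ + 1) * τ ^ (1 - γ)) * τ ^ (γ + 3) := this
      _ = K * (γ + 1) * (γ * τ) * (τ ^ (γ + 2) * τ ^ (1 - γ)) := by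
          rw [show γ + 3 = (γ + 2) + 1 by ring, Real.rpow_add_one hτpos.ne']; ring
      _ = K * (γ + 1) * (γ * τ) * τ ^ 3 := by rw [← hτ3eq]
  have hden2 : K * (γ + 1) * (γ * τ) / τ ^ (γ + 3) ≤
      K * (γ + 1) * (γ * τ) / (τ - b) ^ (γ + 3) := by
    gcongr
  have hden3 : K * (γ + 1) * (γ * τ) / (τ - b) ^ (γ + 3) ≤
      K * (γ + 1) * (γ * τ + 2 * b) / (τ - b) ^ (γ + 3) := by
    gcongr
    linarith
  have hden : 0 < 2 * (-(K * (γ + 1)) / (τ - b) ^ (γ + 2) + 2 * a / τ ^ 3) +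
      τ * (K * (γ + 1) * (γ + 2) / (τ - b) ^ (γ + 3) - 6 * a / τ ^ 4) := by
    rw [hDeq]
    linarith
  exact div_pos hnum hden
end

section
/- Let z = φ̂(ξ) - φ̂(ξ₂) with φ̂' < 0, and t(ξ) = √(1 - ω̂(ξ)²) with ω̂ ∈ (0,1), ω̂' > 0, and suppose φ̂'(ξ) = -(ĉ(ξ)/ω̂(ξ))√(1+ψ'(ξ)²). Writing z as a function of t along the curve via ξ = ξ̂, the derivative satisfies dz/dt = (ĉ√(1+ψ'²)/(ω̂² ω̂'))·t evaluated at ξ̂(z). In particular, if ĉ ≥ c₀ > 0, |ψ'| ≥ ψ₀' ≥ 0 and ω̂, ω̂' ≤ ψ₁, then dz/dt ≥ (c₀√(1+ψ₀'²)/ψ₁³)·t > 0 for t > 0. -/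
/-!
Along the curve, `dz/dt` is the quotient `φ̂'(ξ) / t'(ξ)` with `t'(ξ) = -ω̂ω̂'/√(1-ω̂²)`;
substituting `φ̂' = -(ĉ/ω̂)√(1+ψ'²)` the two minus signs cancel and the quotient is
`(ĉ√(1+ψ'²)/(ω̂²ω̂'))·t`. The lower bound follows by making the numerator smaller
(`ĉ ≥ c₀`, `|ψ'| ≥ ψ₀'`) and the denominator larger (`ω̂, ω̂' ≤ ψ₁`).
-/

open Real

/-- This also holds when `s = 0`, where both sides vanish because `x / 0 = 0`. -/
lemma neg_div_mul_div_neg_mul_div (c q s : ℝ) {w w' : ℝ} (hw : w ≠ 0) (hw' : w' ≠ 0) :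
    -(c / w) * q / (-(w * w') / s) = c * q / (w ^ 2 * w') * s := by
  rcases eq_or_ne s 0 with rfl | _
  · simp
  · field_simp

lemma sqrt_one_add_sq_le_of_le_abs {a b : ℝ} (ha : 0 ≤ a) (hab : a ≤ |b|) :
    √(1 + a ^ 2) ≤ √(1 + b ^ 2) := by
  refine sqrt_le_sqrt (add_le_add_right ?_ 1)
  simpa only [sq_abs] using pow_le_pow_left₀ ha hab 2

lemma sq_mul_le_pow_three {w w' B : ℝ} (hw : 0 ≤ w) (hw' : 0 ≤ w') (hwB : w ≤ B)
    (hw'B : w' ≤ B) : w ^ 2 * w' ≤ B ^ 3 := by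
  calc w ^ 2 * w' ≤ B ^ 2 * B := by gcongr
    _ = B ^ 3 := by ring

lemma div_sq_mul_lower_bound {c₀ c a b w w' B : ℝ} (hc₀ : 0 ≤ c₀) (hc : c₀ ≤ c)
    (ha : 0 ≤ a) (hab : a ≤ |b|) (hw : 0 < w) (hw' : 0 < w') (hwB : w ≤ B)
    (hw'B : w' ≤ B) :
    c₀ * √(1 + a ^ 2) / B ^ 3 ≤ c * √(1 + b ^ 2) / (w ^ 2 * w') := by
  have hnum : c₀ * √(1 + a ^ 2) ≤ c * √(1 + b ^ 2) :=
    mul_le_mul hc (sqrt_one_add_sq_le_of_le_abs ha hab) (sqrt_nonneg _) (hc₀.trans hc)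
  exact div_le_div₀ ((by positivity : 0 ≤ c₀ * √(1 + a ^ 2)).trans hnum) hnum (by positivity)
    (sq_mul_le_pow_three hw.le hw'.le hwB hw'B)

theorem hodograph_curve_slope_general
    (ξ₁ ξ₂ c₀ ψ₀' ψ₁ : ℝ) (φhat' ωhat ωhat' chat ψ' : ℝ → ℝ)
    (hc₀ : 0 < c₀) (hψ₀' : 0 ≤ ψ₀')
    (hφ' : ∀ ξ ∈ Set.Icc ξ₁ ξ₂,
      φhat' ξ = -(chat ξ / ωhat ξ) * Real.sqrt (1 + (ψ' ξ) ^ 2))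
    (hω : ∀ ξ ∈ Set.Icc ξ₁ ξ₂, 0 < ωhat ξ ∧ ωhat ξ < 1)
    (hω' : ∀ ξ ∈ Set.Icc ξ₁ ξ₂, 0 < ωhat' ξ)
    (hcb : ∀ ξ ∈ Set.Icc ξ₁ ξ₂, c₀ ≤ chat ξ)
    (hψb : ∀ ξ ∈ Set.Icc ξ₁ ξ₂, ψ₀' ≤ |ψ' ξ|)
    (hωb : ∀ ξ ∈ Set.Icc ξ₁ ξ₂, ωhat ξ ≤ ψ₁ ∧ ωhat' ξ ≤ ψ₁) :
    ∀ ξ ∈ Set.Icc ξ₁ ξ₂,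
      (φhat' ξ / (-(ωhat ξ * ωhat' ξ) / Real.sqrt (1 - (ωhat ξ) ^ 2)) =
        (chat ξ * Real.sqrt (1 + (ψ' ξ) ^ 2) / ((ωhat ξ) ^ 2 * ωhat' ξ)) *
          Real.sqrt (1 - (ωhat ξ) ^ 2)) ∧
      ((c₀ * Real.sqrt (1 + ψ₀' ^ 2) / ψ₁ ^ 3) * Real.sqrt (1 - (ωhat ξ) ^ 2) ≤
        φhat' ξ / (-(ωhat ξ * ωhat' ξ) / Real.sqrt (1 - (ωhat ξ) ^ 2))) ∧
      (0 < Real.sqrt (1 - (ωhat ξ) ^ 2) →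
        0 < φhat' ξ / (-(ωhat ξ * ωhat' ξ) / Real.sqrt (1 - (ωhat ξ) ^ 2))) := by
  intro ξ hξ
  have hωpos := (hω ξ hξ).1
  have hω'pos := hω' ξ hξ
  have hslope := hφ' ξ hξ ▸
    neg_div_mul_div_neg_mul_div (chat ξ) √(1 + ψ' ξ ^ 2) √(1 - ωhat ξ ^ 2) hωpos.ne' hω'pos.ne'
  refine ⟨hslope, ?_, fun _ => ?_⟩ <;> rw [hslope]
  · exact mul_le_mul_of_nonneg_right (div_sq_mul_lower_bound hc₀.le (hcb ξ hξ) hψ₀' (hψb ξ hξ)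
      hωpos hω'pos (hωb ξ hξ).1 (hωb ξ hξ).2) (sqrt_nonneg _)
  · have hchat : 0 < chat ξ := hc₀.trans_le (hcb ξ hξ)
    positivity

/-- Slope of the boundary curve in the hodograph plane: with
`z'(ξ) = φ̂'(ξ) = -(ĉ/ω̂)√(1+ψ'²)` and `t'(ξ) = -ω̂ω̂'/√(1-ω̂²)`, the ratio
`dz/dt` equals `(ĉ√(1+ψ'²)/(ω̂²ω̂'))·t` with `t = √(1-ω̂²)`, and under the
stated bounds it is at least `(c₀√(1+ψ₀'²)/ψ₁³)·t > 0` when `t > 0`. -/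
theorem hodograph_curve_slope
    (ξ₁ ξ₂ c₀ ψ₀' ψ₁ : ℝ) (φhat' ωhat ωhat' chat ψ' : ℝ → ℝ)
    (hc₀ : 0 < c₀) (hψ₀' : 0 ≤ ψ₀') (hψ₁ : 0 < ψ₁)
    (hφ' : ∀ ξ ∈ Set.Icc ξ₁ ξ₂,
      φhat' ξ = -(chat ξ / ωhat ξ) * Real.sqrt (1 + (ψ' ξ) ^ 2))
    (hω : ∀ ξ ∈ Set.Icc ξ₁ ξ₂, 0 < ωhat ξ ∧ ωhat ξ < 1)
    (hω' : ∀ ξ ∈ Set.Icc ξ₁ ξ₂, 0 < ωhat' ξ)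
    (hcb : ∀ ξ ∈ Set.Icc ξ₁ ξ₂, c₀ ≤ chat ξ)
    (hψb : ∀ ξ ∈ Set.Icc ξ₁ ξ₂, ψ₀' ≤ |ψ' ξ|)
    (hωb : ∀ ξ ∈ Set.Icc ξ₁ ξ₂, ωhat ξ ≤ ψ₁ ∧ ωhat' ξ ≤ ψ₁) :
    ∀ ξ ∈ Set.Icc ξ₁ ξ₂,
      (φhat' ξ / (-(ωhat ξ * ωhat' ξ) / Real.sqrt (1 - (ωhat ξ) ^ 2)) =
        (chat ξ * Real.sqrt (1 + (ψ' ξ) ^ 2) / ((ωhat ξ) ^ 2 * ωhat' ξ)) *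
          Real.sqrt (1 - (ωhat ξ) ^ 2)) ∧
      ((c₀ * Real.sqrt (1 + ψ₀' ^ 2) / ψ₁ ^ 3) * Real.sqrt (1 - (ωhat ξ) ^ 2) ≤
        φhat' ξ / (-(ωhat ξ * ωhat' ξ) / Real.sqrt (1 - (ωhat ξ) ^ 2))) ∧
      (0 < Real.sqrt (1 - (ωhat ξ) ^ 2) →
        0 < φhat' ξ / (-(ωhat ξ * ωhat' ξ) / Real.sqrt (1 - (ωhat ξ) ^ 2))) :=
  hodograph_curve_slope_general ξ₁ ξ₂ c₀ ψ₀' ψ₁ φhat' ωhat ωhat' chat ψ' hc₀ hψ₀' hφ' hω hω' hcb hψb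
    hωb
end
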